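/- arXiv:1609.03004 — 7 statements merged into one kernel-verified Lean document; each statement's English description precedes it below -/
import Mathlib

section
/- Let X be a nonnegative random variable and g(x) = -log P(X > x). For d ≥ 0 and m ≥ 0 define L_{m,d} = {ℓ ∈ [0,2m] : g(ℓ) + g(2m-ℓ) ≤ 2(g(m)+d)}. If X, Y are i.i.d. with this law, then P(X+Y > 2m) ≥ e^{-2d} · |L_{m,d}|_g · P(X > m)², where |·|_g denotes the Lebesgue–Stieltjes measure associated to g. -/
/-!
Let `μ` be the law of `X`, so that `μ (x, ∞) = e^{-g x}`. The heart of the matter is that the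
measure `e^{-g} dg` is dominated by `μ`. On an interval `(a, b]` this follows from the layer-cake
formula: `dg {t ∈ (a, b] | g t < u}` is at most the Lebesgue measure of `(g a, g b) ∩ (-∞, u)`
(a jump of `g` only sends mass to where `e^{-g}` is smaller), so
`∫_{(a,b]} e^{-g} dg ≤ ∫_{g a}^{g b} e^{-v} dv = μ (a, b]`; and a Stieltjes measure is the largest
measure with prescribed masses of the intervals `(a, b]`. Hence
`|L|_g = ∫_L e^{g} e^{-g} dg ≤ ∫_L e^{g} dμ`. For `ℓ ∈ L` we have
`P(Y > 2m - ℓ) = e^{-g (2m - ℓ)} ≥ e^{-2 (g m + d)} e^{g ℓ}`, and integrating over `X = ℓ ∈ L`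
gives `P(X + Y > 2m) ≥ e^{-2 (g m + d)} |L|_g`, which is the claim since `P(X > m) = e^{-g m}`.
-/

open MeasureTheory ProbabilityTheory Filter Set Real
open scoped ENNReal

theorem lintegral_exp_neg_le_of_measure_lt_le {α β : Type*} [MeasurableSpace α]
    [MeasurableSpace β] {ρ : Measure α} {ρ' : Measure β} {h : α → ℝ} {h' : β → ℝ}
    (hh : AEMeasurable h ρ) (hh' : AEMeasurable h' ρ')
    (hle : ∀ u, ρ {x | h x < u} ≤ ρ' {x | h' x < u}) :
    ∫⁻ x, ENNReal.ofReal (exp (-h x)) ∂ρ ≤ ∫⁻ x, ENNReal.ofReal (exp (-h' x)) ∂ρ' := by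
  rw [lintegral_eq_lintegral_meas_lt (f := fun x => exp (-h x)) _
      (.of_forall fun _ => (exp_pos _).le) hh.neg.exp,
    lintegral_eq_lintegral_meas_lt (f := fun x => exp (-h' x)) _
      (.of_forall fun _ => (exp_pos _).le) hh'.neg.exp]
  refine setLIntegral_mono' measurableSet_Ioi fun t (ht : 0 < t) => ?_
  have hlt : ∀ y, t < exp (-y) ↔ y < -log t := fun y => by
    rw [← log_lt_iff_lt_exp ht, lt_neg]
  simp only [hlt]
  exact hle _

namespace StieltjesFunction

section

variable {R : Type*} [LinearOrder R] [TopologicalSpace R] [OrderTopology R] [CompactIccSpace R]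
  [MeasurableSpace R] [BorelSpace R] [SecondCountableTopology R] [DenselyOrdered R] [NoBotOrder R]

theorem le_measure_of_measure_Ioc_le (f : StieltjesFunction R) {ν : Measure R}
    (h : ∀ a b, ν (Ioc a b) ≤ f.measure (Ioc a b)) : ν ≤ f.measure := by
  have : ν.toOuterMeasure ≤ f.outer := OuterMeasure.le_ofFunction.2 fun s => by
    have hs : s \ botSet = s := by ext x; simp [botSet]
    rcases isEmpty_or_nonempty R with hR | hR
    · simp [Subsingleton.elim s ∅]
    rw [f.length_eq, hs]
    refine le_iInf₂ fun a b => le_iInf fun hab => ?_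
    exact (measure_mono hab).trans ((h a b).trans (f.measure_Ioc a b).le)
  intro s
  rw [f.measure_def]
  exact this s

end

theorem measure_Ioc_inter_lt_le (g : StieltjesFunction ℝ) (a b u : ℝ) :
    g.measure (Ioc a b ∩ {t | g t < u}) ≤ volume (Ioc (g a) (g b) ∩ {v | v < u}) := by
  set S := Ioc a b ∩ {t | g t < u}
  rcases S.eq_empty_or_nonempty with hS | ⟨s, hs⟩
  · simp [hS]
  have hbdd : BddAbove S := bddAbove_Ioc.mono inter_subset_left
  set c := sSup S
  have hac : a < c := hs.1.1.trans_le (le_csSup hbdd hs)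
  have hcb : c ≤ b := csSup_le ⟨s, hs⟩ fun t ht => ht.1.2
  obtain ⟨y, hSy, hyb, hyu⟩ :
      ∃ y, g.measure S ≤ ENNReal.ofReal (y - g a) ∧ y ≤ g b ∧ y ≤ u := by
    by_cases hgc : g c < u
    · have hSc : S ⊆ Ioc a c := fun t ht => ⟨ht.1.1, le_csSup hbdd ht⟩
      exact ⟨g c, (measure_mono hSc).trans (g.measure_Ioc a c).le, g.mono hcb, hgc.le⟩
    -- Then `S` misses its supremum `c`, and `g < u` on `S` bounds the left limit of `g` at `c`.
    have hSc : S ⊆ Ioo a c := fun t ht =>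
      ⟨ht.1.1, (le_csSup hbdd ht).lt_of_ne fun htc => hgc (htc ▸ ht.2 :)⟩
    have hlim : Function.leftLim g c ≤ u := by
      refine le_of_tendsto (g.mono.tendsto_leftLim c) ?_
      filter_upwards [Ioo_mem_nhdsLT hac] with t ht
      obtain ⟨t', ht'S, htt'⟩ := exists_lt_of_lt_csSup ⟨s, hs⟩ ht.2
      exact (g.mono htt'.le).trans ht'S.2.le
    exact ⟨_, (measure_mono hSc).trans g.measure_Ioo.le,
      (g.mono.leftLim_le le_rfl).trans (g.mono hcb), hlim⟩
  calc g.measure S ≤ ENNReal.ofReal (y - g a) := hSy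
    _ ≤ ENNReal.ofReal (min (g b) u - g a) := by gcongr; exact le_min hyb hyu
    _ = volume (Ioo (g a) (min (g b) u)) := Real.volume_Ioo.symm
    _ ≤ _ := by
      refine measure_mono fun v hv => ?_
      exact ⟨⟨hv.1, hv.2.le.trans (min_le_left _ _)⟩, hv.2.trans_le (min_le_right _ _)⟩

theorem setLIntegral_exp_neg_Ioc_le (g : StieltjesFunction ℝ) {a b : ℝ} (hab : a ≤ b) :
    ∫⁻ t in Ioc a b, ENNReal.ofReal (exp (-g t)) ∂g.measure
      ≤ ENNReal.ofReal (exp (-g a) - exp (-g b)) := by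
  calc ∫⁻ t in Ioc a b, ENNReal.ofReal (exp (-g t)) ∂g.measure
      ≤ ∫⁻ v in Ioc (g a) (g b), ENNReal.ofReal (exp (-v)) := by
        refine lintegral_exp_neg_le_of_measure_lt_le g.mono.measurable.aemeasurable
          aemeasurable_id fun u => ?_
        rw [Measure.restrict_apply' measurableSet_Ioc, Measure.restrict_apply' measurableSet_Ioc,
          inter_comm, inter_comm _ (Ioc _ _)]
        exact g.measure_Ioc_inter_lt_le a b u
    _ = ENNReal.ofReal (exp (-g a) - exp (-g b)) := by
        rw [← ofReal_integral_eq_lintegral_ofReal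
            (by fun_prop : Continuous fun v : ℝ => exp (-v)).integrableOn_Ioc
            (.of_forall fun _ => (exp_pos _).le),
          ← intervalIntegral.integral_of_le (g.mono hab),
          intervalIntegral.integral_comp_neg (fun v => exp v), integral_exp]

theorem withDensity_exp_neg_le (g : StieltjesFunction ℝ) {μ : Measure ℝ} [IsProbabilityMeasure μ]
    (hμ : ∀ x, μ (Ioi x) = ENNReal.ofReal (exp (-g x))) :
    g.measure.withDensity (fun t => ENNReal.ofReal (exp (-g t))) ≤ μ := by
  rw [← measure_cdf μ]
  refine (cdf μ).le_measure_of_measure_Ioc_le fun a b => ?_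
  rw [measure_cdf, withDensity_apply _ measurableSet_Ioc]
  rcases le_or_gt a b with hab | hba
  · have hμIoc : μ (Ioc a b) = ENNReal.ofReal (exp (-g a) - exp (-g b)) := by
      rw [← Ioi_sdiff_Ioi, measure_sdiff (Ioi_subset_Ioi hab) nullMeasurableSet_Ioi
        (measure_ne_top μ _), hμ, hμ, ← ENNReal.ofReal_sub _ (exp_pos _).le]
    exact hμIoc ▸ g.setLIntegral_exp_neg_Ioc_le hab
  · simp [Ioc_eq_empty_of_le hba.le]

theorem measure_le_setLIntegral_exp (g : StieltjesFunction ℝ) {μ : Measure ℝ}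
    [IsProbabilityMeasure μ] (hμ : ∀ x, μ (Ioi x) = ENNReal.ofReal (exp (-g x)))
    {L : Set ℝ} (hL : MeasurableSet L) :
    g.measure L ≤ ∫⁻ x in L, ENNReal.ofReal (exp (g x)) ∂μ := by
  have hg : Measurable g := g.mono.measurable
  calc g.measure L
      = ∫⁻ x in L, ENNReal.ofReal (exp (g x))
          ∂g.measure.withDensity (fun t => ENNReal.ofReal (exp (-g t))) := by
        rw [restrict_withDensity hL, lintegral_withDensity_eq_lintegral_mul _
          (by fun_prop : Measurable fun t => ENNReal.ofReal (exp (-g t)))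
          (by fun_prop : Measurable fun t => ENNReal.ofReal (exp (g t)))]
        simp [← ENNReal.ofReal_mul (exp_pos _).le, ← exp_add]
    _ ≤ ∫⁻ x in L, ENNReal.ofReal (exp (g x)) ∂μ :=
        lintegral_mono' (Measure.restrict_mono subset_rfl (g.withDensity_exp_neg_le hμ)) le_rfl

theorem exp_neg_mul_measure_le_lintegral_tail (g : StieltjesFunction ℝ)
    {μ : Measure ℝ} [IsProbabilityMeasure μ] (hμ : ∀ x, μ (Ioi x) = ENNReal.ofReal (exp (-g x)))
    {L : Set ℝ} (hL : MeasurableSet L) {c K : ℝ} (hLK : ∀ ℓ ∈ L, g ℓ + g (c - ℓ) ≤ K) :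
    ENNReal.ofReal (exp (-K)) * g.measure L ≤ ∫⁻ x, μ (Ioi (c - x)) ∂μ :=
  calc ENNReal.ofReal (exp (-K)) * g.measure L
      ≤ ENNReal.ofReal (exp (-K)) * ∫⁻ x in L, ENNReal.ofReal (exp (g x)) ∂μ := by
        gcongr; exact g.measure_le_setLIntegral_exp hμ hL
    _ = ∫⁻ x in L, ENNReal.ofReal (exp (-K + g x)) ∂μ := by
        rw [← lintegral_const_mul' _ _ ENNReal.ofReal_ne_top]
        simp_rw [← ENNReal.ofReal_mul (exp_pos _).le, exp_add]
    _ ≤ ∫⁻ x in L, μ (Ioi (c - x)) ∂μ := setLIntegral_mono' hL fun x hx => by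
        rw [hμ]
        exact ENNReal.ofReal_le_ofReal (exp_le_exp.2 (by linarith [hLK x hx]))
    _ ≤ ∫⁻ x, μ (Ioi (c - x)) ∂μ := setLIntegral_le_lintegral _ _

end StieltjesFunction

theorem ProbabilityTheory.IndepFun.measure_lt_add {Ω : Type*} [MeasurableSpace Ω]
    {P : Measure Ω} [IsFiniteMeasure P] {X Y : Ω → ℝ} (hX : Measurable X) (hY : Measurable Y)
    (hXY : IndepFun X Y P) (c : ℝ) :
    P {ω | c < X ω + Y ω} = ∫⁻ x, P.map Y (Ioi (c - x)) ∂P.map X := by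
  have hS : MeasurableSet {p : ℝ × ℝ | c < p.1 + p.2} :=
    measurableSet_lt measurable_const (by fun_prop)
  calc P {ω | c < X ω + Y ω} = P.map (fun ω => (X ω, Y ω)) {p | c < p.1 + p.2} :=
        (Measure.map_apply (hX.prodMk hY) hS).symm
    _ = ∫⁻ x, P.map Y (Prod.mk x ⁻¹' {p | c < p.1 + p.2}) ∂P.map X := by
        rw [(indepFun_iff_map_prod_eq_prod_map_map hX.aemeasurable hY.aemeasurable).1 hXY,
          Measure.prod_apply hS]
    _ = ∫⁻ x, P.map Y (Ioi (c - x)) ∂P.map X := by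
        simp only [preimage_ofPred_eq, Ioi, sub_lt_iff_lt_add']

theorem stmt_2_general {Ω : Type*} [MeasurableSpace Ω] (P : Measure Ω) [IsProbabilityMeasure P]
    (X Y : Ω → ℝ) (hXm : Measurable X) (hYm : Measurable Y)
    (hXY : IndepFun X Y P) (hid : IdentDistrib X Y P P)
    (hXu : ∀ m : ℝ, 0 < P {ω | X ω > m})
    (g : StieltjesFunction ℝ)
    (hg : ∀ x : ℝ, g x = -Real.log (P {ω | X ω > x}).toReal)
    (m d : ℝ) :
    P {ω | X ω + Y ω > 2 * m} ≥
      ENNReal.ofReal (Real.exp (-(2 * d))) *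
        g.measure {ℓ : ℝ | ℓ ∈ Set.Icc 0 (2 * m) ∧ g ℓ + g (2 * m - ℓ) ≤ 2 * (g m + d)} *
        (P {ω | X ω > m}) ^ 2 := by
  have htail : ∀ x, P {ω | X ω > x} = ENNReal.ofReal (exp (-g x)) := fun x => by
    rw [hg, neg_neg, exp_log (ENNReal.toReal_pos (hXu x).ne' (measure_ne_top _ _)),
      ENNReal.ofReal_toReal (measure_ne_top _ _)]
  have hμ : ∀ x, P.map X (Ioi x) = ENNReal.ofReal (exp (-g x)) := fun x => by
    rw [Measure.map_apply hXm measurableSet_Ioi]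
    exact htail x
  have : IsProbabilityMeasure (P.map X) := Measure.isProbabilityMeasure_map hXm.aemeasurable
  have hL : MeasurableSet {ℓ : ℝ | ℓ ∈ Icc 0 (2 * m) ∧ g ℓ + g (2 * m - ℓ) ≤ 2 * (g m + d)} :=
    have hgm : Measurable g := g.mono.measurable
    measurableSet_Icc.inter
      (measurableSet_le (hgm.add (hgm.comp (measurable_const.sub measurable_id))) measurable_const)
  calc ENNReal.ofReal (exp (-(2 * d))) * g.measure _ * (P {ω | X ω > m}) ^ 2
      = ENNReal.ofReal (exp (-(2 * (g m + d)))) * g.measure _ := by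
        rw [htail, ← ENNReal.ofReal_pow (exp_pos _).le, mul_right_comm,
          ← ENNReal.ofReal_mul (exp_pos _).le, ← exp_nat_mul, ← exp_add]
        ring_nf
    _ ≤ ∫⁻ x, P.map X (Ioi (2 * m - x)) ∂P.map X :=
        g.exp_neg_mul_measure_le_lintegral_tail hμ hL fun _ hℓ => hℓ.2
    _ = P {ω | X ω + Y ω > 2 * m} := by
        rw [hXY.measure_lt_add hXm hYm, hid.map_eq]

/-- For i.i.d. nonnegative `X, Y` with log-tail function
`g(x) = -log P(X > x)` (viewed as a Stieltjes function) and
`L_{m,d} = {ℓ ∈ [0,2m] : g(ℓ) + g(2m-ℓ) ≤ 2(g(m)+d)}`, one has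
`P(X+Y > 2m) ≥ e^{-2d} ⬝ |L_{m,d}|_g ⬝ P(X > m)²`. -/
theorem stmt_2 {Ω : Type*} [MeasurableSpace Ω] (P : Measure Ω) [IsProbabilityMeasure P]
    (X Y : Ω → ℝ) (hXm : Measurable X) (hYm : Measurable Y)
    (hXY : IndepFun X Y P) (hid : IdentDistrib X Y P P)
    (hX0 : ∀ ω, 0 ≤ X ω) (hY0 : ∀ ω, 0 ≤ Y ω)
    (hXu : ∀ m : ℝ, 0 < P {ω | X ω > m})
    (g : StieltjesFunction ℝ)
    (hg : ∀ x : ℝ, g x = -Real.log (P {ω | X ω > x}).toReal)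
    (m d : ℝ) (hm : 0 ≤ m) (hd : 0 ≤ d) :
    P {ω | X ω + Y ω > 2 * m} ≥
      ENNReal.ofReal (Real.exp (-(2 * d))) *
        g.measure {ℓ : ℝ | ℓ ∈ Set.Icc 0 (2 * m) ∧ g ℓ + g (2 * m - ℓ) ≤ 2 * (g m + d)} *
        (P {ω | X ω > m}) ^ 2 :=
  stmt_2_general P X Y hXm hYm hXY hid hXu g hg m d
end

section
/- Let g : [0,∞) → [0,∞) be nondecreasing with g(0)=0, and let h be its convex minorant, i.e., the pointwise supremum of all nondecreasing convex functions ≤ g. If I = [x₀, x₁] ⊂ [0,∞) is a closed interval with inf_I (g - h) > 0, then h is affine on I. -/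
/-!
The secant line `L` of `h` through `x₀` and `x₁` lies above `h` on `[x₀, x₁]` and below it
elsewhere on `[0, ∞)`. Hence `(1 - t) h + t max(h, L)` is again convex and monotone, agrees with
`h` off the interval and exceeds it on the interval by at most `t (h x₁ - h x₀)`. For `t > 0` small
this stays below `g` thanks to the positive gap `inf (g - h)`, so maximality of `h` forces
`L ≤ h`, i.e. `h = L` on `[x₀, x₁]`.
-/

open Set

section Secant

variable {𝕜 : Type*} [Field 𝕜] [LinearOrder 𝕜] [IsStrictOrderedRing 𝕜] {s : Set 𝕜} {f : 𝕜 → 𝕜}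
  {a b x : 𝕜}

def secantLine (f : 𝕜 → 𝕜) (a b : 𝕜) (x : 𝕜) : 𝕜 := f a + slope f a b * (x - a)

lemma secantLine_sub_eq (f : 𝕜 → 𝕜) (a b x : 𝕜) :
    secantLine f a b x - f x = (slope f a b - slope f a x) * (x - a) := by
  have h := sub_smul_slope f a x
  simp only [smul_eq_mul, vsub_eq_sub] at h
  simp only [secantLine]
  linear_combination h

lemma secantLine_right (f : 𝕜 → 𝕜) (a b : 𝕜) : secantLine f a b b = f b := by
  simpa [sub_eq_zero] using secantLine_sub_eq f a b b

lemma monotone_secantLine (h : 0 ≤ slope f a b) : Monotone (secantLine f a b) :=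
  fun x y hxy => by simp only [secantLine]; gcongr

lemma convexOn_secantLine (hs : Convex 𝕜 s) : ConvexOn 𝕜 s (secantLine f a b) :=
  ⟨hs, fun x _ y _ p q _ _ hpq => le_of_eq <| by
    simp only [secantLine, smul_eq_mul]
    linear_combination (slope f a b * a - f a) * hpq⟩

namespace ConvexOn

lemma le_secantLine (hf : ConvexOn 𝕜 s f) (ha : a ∈ s) (hb : b ∈ s) (hab : a < b) (hxs : x ∈ s)
    (hx : x ∈ Icc a b) : f x ≤ secantLine f a b x := by
  rw [← sub_nonneg, secantLine_sub_eq]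
  rcases hx.1.eq_or_lt with rfl | hax
  · simp
  exact mul_nonneg (sub_nonneg.2 <| hf.slope_mono ha ⟨hxs, hax.ne'⟩ ⟨hb, hab.ne'⟩ hx.2)
    (sub_nonneg.2 hax.le)

lemma secantLine_le (hf : ConvexOn 𝕜 s f) (ha : a ∈ s) (hb : b ∈ s) (hab : a < b) (hxs : x ∈ s)
    (hx : x ∉ Ioo a b) : secantLine f a b x ≤ f x := by
  rw [← sub_nonpos, secantLine_sub_eq]
  rcases le_or_gt x a with hxa | hax
  · rcases hxa.eq_or_lt with rfl | hxa
    · simp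
    exact mul_nonpos_of_nonneg_of_nonpos
      (sub_nonneg.2 <| hf.slope_mono ha ⟨hxs, hxa.ne⟩ ⟨hb, hab.ne'⟩ (hxa.trans hab).le)
      (sub_nonpos.2 hxa.le)
  · have hbx : b ≤ x := not_lt.1 fun hxb => hx ⟨hax, hxb⟩
    exact mul_nonpos_of_nonpos_of_nonneg
      (sub_nonpos.2 <| hf.slope_mono ha ⟨hb, hab.ne'⟩ ⟨hxs, hax.ne'⟩ hbx) (sub_nonneg.2 hax.le)

end ConvexOn

end Secant

section Minorant

variable {𝕜 : Type*} [Field 𝕜] [LinearOrder 𝕜] [IsStrictOrderedRing 𝕜] {s : Set 𝕜}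
  {g h : 𝕜 → 𝕜} {a b ε : 𝕜}

lemma exists_pos_le_one_mul_le {M : 𝕜} (hM : 0 ≤ M) (hε : 0 < ε) :
    ∃ t : 𝕜, 0 < t ∧ t ≤ 1 ∧ t * M ≤ ε := by
  refine ⟨ε / (M + ε), div_pos hε (by linarith), (div_le_one (by linarith)).2 (by linarith), ?_⟩
  rw [div_mul_eq_mul_div, div_le_iff₀ (by linarith)]
  nlinarith

def IsMaxConvexMonotoneMinorantOn (s : Set 𝕜) (g h : 𝕜 → 𝕜) : Prop :=
  ConvexOn 𝕜 s h ∧ MonotoneOn h s ∧ (∀ x ∈ s, h x ≤ g x) ∧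
    ∀ h' : 𝕜 → 𝕜, ConvexOn 𝕜 s h' → MonotoneOn h' s → (∀ x ∈ s, h' x ≤ g x) →
      ∀ x ∈ s, h' x ≤ h x

theorem IsMaxConvexMonotoneMinorantOn.eqOn_secantLine (hh : IsMaxConvexMonotoneMinorantOn s g h)
    (ha : a ∈ s) (hb : b ∈ s) (hab : a < b) (hε : 0 < ε)
    (hgap : ∀ x ∈ Icc a b, ε ≤ g x - h x) : EqOn h (secantLine h a b) (Icc a b) := by
  obtain ⟨hconv, hmono, hle, hmax⟩ := hh
  set L := secantLine h a b
  have hM : 0 ≤ h b - h a := sub_nonneg.2 (hmono ha hb hab.le)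
  have hL_mono : Monotone L :=
    monotone_secantLine (by rw [slope_def_field]; exact div_nonneg hM (sub_nonneg.2 hab.le))
  have hIcc : Icc a b ⊆ s := hconv.1.ordConnected.out ha hb
  obtain ⟨t, ht0, ht1, htM⟩ := exists_pos_le_one_mul_le hM hε
  set h' : 𝕜 → 𝕜 := (1 - t) • h + t • (h ⊔ L) with h'_def
  have h'_apply : ∀ x, h' x = h x + t * (max (h x) (L x) - h x) := fun x => by
    simp only [h'_def, Pi.add_apply, Pi.smul_apply, Pi.sup_apply, smul_eq_mul]; ring
  have h'_conv : ConvexOn 𝕜 s h' :=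
    (hconv.smul (sub_nonneg.2 ht1)).add ((hconv.sup (convexOn_secantLine hconv.1)).smul ht0.le)
  have h'_mono : MonotoneOn h' s := fun x hx y hy hxy => by
    have := sub_nonneg.2 ht1
    have := hmono hx hy hxy
    have := hL_mono hxy
    simp only [h'_def, Pi.add_apply, Pi.smul_apply, Pi.sup_apply, smul_eq_mul]
    gcongr
  have h'_le : ∀ x ∈ s, h' x ≤ g x := by
    intro x hx
    rw [h'_apply]
    by_cases hxI : x ∈ Ioo a b
    · have hxI' : x ∈ Icc a b := Ioo_subset_Icc_self hxI
      have hLx : L x - h x ≤ h b - h a := by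
        have hLb : L x ≤ h b := (hL_mono hxI'.2).trans_eq (secantLine_right h a b)
        linarith [hmono ha hx hxI'.1]
      rw [max_eq_right (hconv.le_secantLine ha hb hab hx hxI')]
      nlinarith [hgap x hxI']
    · rw [max_eq_left (hconv.secantLine_le ha hb hab hx hxI)]
      simpa using hle x hx
  intro x hx
  have hbend := hmax h' h'_conv h'_mono h'_le x (hIcc hx)
  rw [h'_apply] at hbend
  have : max (h x) (L x) ≤ h x := by nlinarith
  exact le_antisymm (hconv.le_secantLine ha hb hab (hIcc hx) hx) (le_of_max_le_right this)

end Minorant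

theorem stmt_5_general (g h : ℝ → ℝ)
    (hh_conv : ConvexOn ℝ (Set.Ici 0) h) (hh_mono : MonotoneOn h (Set.Ici 0))
    (hh_le : ∀ x ∈ Set.Ici (0:ℝ), h x ≤ g x)
    (hh_max : ∀ h' : ℝ → ℝ, ConvexOn ℝ (Set.Ici 0) h' → MonotoneOn h' (Set.Ici 0) →
      (∀ x ∈ Set.Ici (0:ℝ), h' x ≤ g x) → ∀ x ∈ Set.Ici (0:ℝ), h' x ≤ h x)
    (x₀ x₁ : ℝ) (hx₀ : 0 ≤ x₀) (hx₀₁ : x₀ ≤ x₁)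
    (hinf : 0 < sInf ((fun x => g x - h x) '' Set.Icc x₀ x₁)) :
    ∃ a b : ℝ, ∀ x ∈ Set.Icc x₀ x₁, h x = a * x + b := by
  rcases hx₀₁.eq_or_lt with rfl | hlt
  · exact ⟨0, h x₀, fun x hx => by rw [Icc_self, mem_singleton_iff] at hx; simp [hx]⟩
  have hbdd : BddBelow ((fun x => g x - h x) '' Icc x₀ x₁) :=
    ⟨0, by rintro _ ⟨x, hx, rfl⟩; exact sub_nonneg.2 (hh_le x (hx₀.trans hx.1))⟩
  have hL := IsMaxConvexMonotoneMinorantOn.eqOn_secantLine ⟨hh_conv, hh_mono, hh_le, hh_max⟩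
    hx₀ (hx₀.trans hlt.le) hlt hinf fun x hx => csInf_le hbdd ⟨x, hx, rfl⟩
  exact ⟨slope h x₀ x₁, h x₀ - slope h x₀ x₁ * x₀,
    fun x hx => (hL hx).trans (by simp only [secantLine]; ring)⟩

/-- Let `g : [0,∞) → [0,∞)` be nondecreasing with `g 0 = 0`, and let `h` be
its convex minorant (the maximal nondecreasing convex function `≤ g` on `[0,∞)`).
If `inf_{[x₀,x₁]} (g - h) > 0`, then `h` is affine on `[x₀,x₁]`. -/
theorem stmt_5 (g h : ℝ → ℝ)
    (hg_mono : MonotoneOn g (Set.Ici 0)) (hg_nonneg : ∀ x ∈ Set.Ici (0:ℝ), 0 ≤ g x)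
    (hg0 : g 0 = 0)
    (hh_conv : ConvexOn ℝ (Set.Ici 0) h) (hh_mono : MonotoneOn h (Set.Ici 0))
    (hh_le : ∀ x ∈ Set.Ici (0:ℝ), h x ≤ g x)
    (hh_max : ∀ h' : ℝ → ℝ, ConvexOn ℝ (Set.Ici 0) h' → MonotoneOn h' (Set.Ici 0) →
      (∀ x ∈ Set.Ici (0:ℝ), h' x ≤ g x) → ∀ x ∈ Set.Ici (0:ℝ), h' x ≤ h x)
    (x₀ x₁ : ℝ) (hx₀ : 0 ≤ x₀) (hx₀₁ : x₀ ≤ x₁)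
    (hinf : 0 < sInf ((fun x => g x - h x) '' Set.Icc x₀ x₁)) :
    ∃ a b : ℝ, ∀ x ∈ Set.Icc x₀ x₁, h x = a * x + b :=
  stmt_5_general g h hh_conv hh_mono hh_le hh_max x₀ x₁ hx₀ hx₀₁ hinf
end

section
/- Let d > 0 and let f : [0,∞) → [0,∞) be an increasing convex function with f(0) = 0 and f(x) → ∞ as x → ∞. Then limsup_{m→∞} (f(m+t(m)) - f(m-t(m))) = ∞, where [m - t(m), m + t(m)] = {ℓ ∈ [0,2m] : f(ℓ)+f(2m-ℓ) ≤ 2(f(m)+d)}; equivalently, limsup_{m→∞} |L^f_{m,d}|_f = ∞. -/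
open Filter Set Topology

/-!
Suppose `f (m + t m) - f (m - t m) ≤ C` for all large `m`. By maximality of `L^f_{m,d}` and
continuity of `f`, the endpoints satisfy `f (m + t) + f (m - t) ≥ 2 (f m + d)`, so the right
increment `f (m + t) - f m` lies in `[2d, C]` and the left secant slope on `[m - t, m]` is at most
`1 - 2d/C` times the right secant slope `R m` on `[m, m + t]`. Stepping from `m` to `m + C / R m`
multiplies `R` by at least `C / (C - 2d)` and raises `f` by at least `2d`. The step lengths are thus
geometric, so the points stay bounded (the potential `m + C² / (2d R m)` does not increase) while
`f` along them is unbounded, which is impossible for monotone `f`.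
-/

lemma ConvexOn.slope_le_slope {𝕜 : Type*} [Field 𝕜] [LinearOrder 𝕜] [IsStrictOrderedRing 𝕜]
    {s : Set 𝕜} {f : 𝕜 → 𝕜} (hf : ConvexOn 𝕜 s f) {a b c e : 𝕜} (ha : a ∈ s) (hb : b ∈ s)
    (hc : c ∈ s) (he : e ∈ s) (hab : a < b) (hce : c < e) (hac : a ≤ c) (hbe : b ≤ e) :
    slope f a b ≤ slope f c e :=
  have hae : a < e := hab.trans_le hbe
  calc slope f a b ≤ slope f a e := hf.slope_mono ha ⟨hb, hab.ne'⟩ ⟨he, hae.ne'⟩ hbe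
    _ = slope f e a := slope_comm f a e
    _ ≤ slope f e c := hf.slope_mono he ⟨ha, hae.ne⟩ ⟨hc, hce.ne⟩ hac
    _ = slope f c e := slope_comm f e c

lemma ContinuousAt.le_of_sublevel_subset_Iic {g : ℝ → ℝ} {a b M c : ℝ} (hg : ContinuousAt g b)
    (hab : a ≤ b) (hbM : b < M) (hsub : {x ∈ Icc a M | g x ≤ c} ⊆ Iic b) : c ≤ g b := by
  by_contra! hgb
  have hright : ∀ᶠ x in 𝓝[>] b, (g x < c ∧ x < M) ∧ x ∈ Ioi b :=
    (((hg.eventually (gt_mem_nhds hgb)).and (gt_mem_nhds hbM)).filter_mono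
      nhdsWithin_le_nhds).and self_mem_nhdsWithin
  obtain ⟨x, ⟨hgx, hxM⟩, hbx⟩ := hright.exists
  exact hbx.not_ge (mem_Iic.mp (hsub ⟨⟨hab.trans hbx.le, hxM.le⟩, hgx.le⟩))

/-- What the argument uses about `L^f_{m,d} = [m - τ, m + τ]` when its `f`-length is at most `C`. -/
structure IsTightWindow (f : ℝ → ℝ) (d C m τ : ℝ) : Prop where
  pos : 0 < τ
  nonneg : 0 ≤ m - τ
  le_add : 2 * (f m + d) ≤ f (m + τ) + f (m - τ)
  sub_le : f (m + τ) - f (m - τ) ≤ C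

namespace IsTightWindow

variable {f : ℝ → ℝ} {d C m τ : ℝ}

lemma sub_left_nonneg (hmono : MonotoneOn f (Ici 0)) (h : IsTightWindow f d C m τ) :
    0 ≤ f m - f (m - τ) :=
  sub_nonneg.mpr <| hmono h.nonneg (h.nonneg.trans (by linarith [h.pos])) (by linarith [h.pos])

lemma two_mul_le_sub (hmono : MonotoneOn f (Ici 0)) (h : IsTightWindow f d C m τ) :
    2 * d ≤ f (m + τ) - f m := by
  linarith [h.le_add, h.sub_left_nonneg hmono]

lemma slope_pos (hmono : MonotoneOn f (Ici 0)) (hd : 0 < d) (h : IsTightWindow f d C m τ) :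
    0 < slope f m (m + τ) := by
  rw [slope_def_field, add_sub_cancel_left]
  exact div_pos (by linarith [h.two_mul_le_sub hmono]) h.pos

lemma mul_slope_le (hmono : MonotoneOn f (Ici 0)) (h : IsTightWindow f d C m τ) :
    τ * slope f m (m + τ) ≤ C := by
  rw [slope_def_field, add_sub_cancel_left, mul_div_cancel₀ _ h.pos.ne']
  linarith [h.sub_le, h.sub_left_nonneg hmono]

lemma mul_slope_left_le (hmono : MonotoneOn f (Ici 0)) (hd : 0 ≤ d)
    (h : IsTightWindow f d C m τ) :
    C * slope f (m - τ) m ≤ (C - 2 * d) * slope f m (m + τ) := by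
  rw [slope_def_field, slope_def_field, sub_sub_cancel, add_sub_cancel_left, ← mul_div_assoc,
    ← mul_div_assoc]
  refine div_le_div_of_nonneg_right ?_ h.pos.le
  have hA := h.two_mul_le_sub hmono
  have hCA : f (m + τ) - f m ≤ C := by linarith [h.sub_le, h.sub_left_nonneg hmono]
  nlinarith [h.le_add, mul_nonneg (sub_nonneg.mpr hCA) (by linarith [h.le_add] :
    0 ≤ f (m + τ) - f m - (f m - f (m - τ)))]

lemma slope_le_slope (hconv : ConvexOn ℝ (Ici 0) f) {m' τ' : ℝ} (h : IsTightWindow f d C m τ)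
    (h' : IsTightWindow f d C m' τ') (hle : m + τ ≤ m') :
    slope f m (m + τ) ≤ slope f m' (m' + τ') := by
  have := h.nonneg; have := h.pos; have := h'.pos
  exact hconv.slope_le_slope (mem_Ici.mpr (by linarith)) (mem_Ici.mpr (by linarith))
    (mem_Ici.mpr (by linarith)) (mem_Ici.mpr (by linarith)) (by linarith) (by linarith)
    (by linarith) (by linarith)

lemma slope_le_slope_left (hconv : ConvexOn ℝ (Ici 0) f) {m' τ' : ℝ}
    (h : IsTightWindow f d C m τ) (h' : IsTightWindow f d C m' τ') (hle : m + τ ≤ m')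
    (hle' : m ≤ m' - τ') :
    slope f m (m + τ) ≤ slope f (m' - τ') m' := by
  have := h.nonneg; have := h.pos
  exact hconv.slope_le_slope (mem_Ici.mpr (by linarith)) (mem_Ici.mpr (by linarith))
    (mem_Ici.mpr (by linarith)) (mem_Ici.mpr (by linarith)) (by linarith) (by linarith [h'.pos])
    hle' hle

lemma add_le_add_div_slope (hmono : MonotoneOn f (Ici 0)) (hd : 0 < d)
    (h : IsTightWindow f d C m τ) : m + τ ≤ m + C / slope f m (m + τ) := by
  gcongr
  exact (le_div_iff₀ (h.slope_pos hmono hd)).mpr (h.mul_slope_le hmono)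

lemma potential_le (hconv : ConvexOn ℝ (Ici 0) f) (hmono : MonotoneOn f (Ici 0)) (hd : 0 < d)
    {m' τ' : ℝ} (h : IsTightWindow f d C m τ) (h' : IsTightWindow f d C m' τ')
    (hm' : m' = m + C / slope f m (m + τ)) :
    m' + C ^ 2 / (2 * d * slope f m' (m' + τ')) ≤ m + C ^ 2 / (2 * d * slope f m (m + τ)) := by
  set R := slope f m (m + τ)
  set R' := slope f m' (m' + τ')
  have hR := h.slope_pos hmono hd
  have hR' := h'.slope_pos hmono hd
  have hstep : m + τ ≤ m' := hm' ▸ h.add_le_add_div_slope hmono hd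
  have hC : 0 < C := (mul_pos h.pos hR).trans_le (h.mul_slope_le hmono)
  have hRR' : R ≤ R' := h.slope_le_slope hconv h' hstep
  have hτ' : τ' ≤ C / R := calc
    τ' ≤ C / R' := (le_div_iff₀ hR').mpr (h'.mul_slope_le hmono)
    _ ≤ C / R := div_le_div_of_nonneg_left hC.le hR hRR'
  have hgrow : C * R ≤ (C - 2 * d) * R' := calc
    C * R ≤ C * slope f (m' - τ') m' := by
      gcongr
      exact h.slope_le_slope_left hconv h' hstep (by linarith)
    _ ≤ (C - 2 * d) * R' := h'.mul_slope_left_le hmono hd.le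
  have key : C ^ 2 * R + 2 * d * C * R' ≤ C ^ 2 * R' := by
    nlinarith [mul_le_mul_of_nonneg_left hgrow hC.le]
  rw [hm', add_assoc, add_le_add_iff_left, div_add_div _ _ hR.ne' (by positivity),
    div_le_div_iff₀ (by positivity) (by positivity)]
  nlinarith [mul_le_mul_of_nonneg_left key (mul_pos hd hR).le]

end IsTightWindow

section Iteration

variable {f : ℝ → ℝ} {d C M : ℝ} {t : ℝ → ℝ}

lemma exists_le_potential_le (hconv : ConvexOn ℝ (Ici 0) f) (hmono : MonotoneOn f (Ici 0))
    (hd : 0 < d) (htight : ∀ m ≥ M, IsTightWindow f d C m (t m)) (k : ℕ) :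
    ∃ m ≥ M, f M + 2 * d * k ≤ f m ∧
      m + C ^ 2 / (2 * d * slope f m (m + t m)) ≤ M + C ^ 2 / (2 * d * slope f M (M + t M)) := by
  induction k with
  | zero => exact ⟨M, le_rfl, by simp, le_rfl⟩
  | succ k ih =>
    obtain ⟨m, hmM, hfm, hpot⟩ := ih
    have h := htight m hmM
    have := h.nonneg; have := h.pos
    set m' := m + C / slope f m (m + t m) with hm'
    have hstep : m + t m ≤ m' := h.add_le_add_div_slope hmono hd
    have hm'M : M ≤ m' := by linarith
    have hfm' : f (m + t m) ≤ f m' :=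
      hmono (mem_Ici.mpr (by linarith)) (mem_Ici.mpr (by linarith)) hstep
    refine ⟨m', hm'M, ?_, (h.potential_le hconv hmono hd (htight m' hm'M) hm').trans hpot⟩
    push_cast
    linarith [h.two_mul_le_sub hmono]

lemma not_forall_isTightWindow (hconv : ConvexOn ℝ (Ici 0) f) (hmono : MonotoneOn f (Ici 0))
    (hd : 0 < d) : ¬ ∀ m ≥ M, IsTightWindow f d C m (t m) := by
  intro htight
  set P := M + C ^ 2 / (2 * d * slope f M (M + t M))
  obtain ⟨k, hk⟩ := exists_nat_gt ((f P - f M) / (2 * d))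
  obtain ⟨m, hmM, hfm, hpot⟩ := exists_le_potential_le hconv hmono hd htight k
  have h := htight m hmM
  have hmP : m ≤ P := by
    have := h.slope_pos hmono hd
    exact le_trans (le_add_of_nonneg_right (by positivity)) hpot
  have := h.nonneg; have := h.pos
  have hfP : f m ≤ f P := hmono (mem_Ici.mpr (by linarith)) (mem_Ici.mpr (by linarith)) hmP
  rw [div_lt_iff₀ (by positivity)] at hk
  linarith

end Iteration

lemma isTightWindow_of_eq_Icc {f : ℝ → ℝ} {d C m τ : ℝ} (hcont : ContinuousOn f (Ioi 0))
    (hd : 0 < d) (hm : 0 ≤ m)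
    (hS : {ℓ : ℝ | ℓ ∈ Icc 0 (2 * m) ∧ f ℓ + f (2 * m - ℓ) ≤ 2 * (f m + d)} =
      Icc (m - τ) (m + τ))
    (hC : f (m + τ) - f (m - τ) ≤ C) (hCf : C < f (2 * m) - f 0) : IsTightWindow f d C m τ := by
  have hmS : m ∈ Icc (m - τ) (m + τ) := hS ▸ ⟨⟨hm, by linarith⟩, by ring_nf; linarith⟩
  have hτ : 0 ≤ τ := by linarith [hmS.1]
  obtain ⟨⟨hleft, -⟩, -⟩ := hS.ge (left_mem_Icc.mpr (by linarith) : m - τ ∈ Icc (m - τ) (m + τ))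
  obtain ⟨⟨-, hright⟩, -⟩ := hS.ge (right_mem_Icc.mpr (by linarith) : m + τ ∈ Icc (m - τ) (m + τ))
  have hτm : τ < m := by
    refine lt_of_le_of_ne (by linarith) fun hτm => ?_
    rw [hτm, sub_self, ← two_mul] at hC
    linarith
  have hg : ContinuousAt (fun ℓ => f ℓ + f (2 * m - ℓ)) (m + τ) :=
    (hcont.continuousAt (Ioi_mem_nhds (by linarith))).add
      ((hcont.continuousAt (Ioi_mem_nhds (by linarith))).comp (f := fun ℓ => 2 * m - ℓ)
        (by fun_prop))
  have hle := hg.le_of_sublevel_subset_Iic (c := 2 * (f m + d)) (by linarith) (by linarith)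
    fun x hx => (hS.subset hx).2
  rw [show 2 * m - (m + τ) = m - τ by ring] at hle
  refine ⟨lt_of_le_of_ne hτ fun hτ0 => ?_, by linarith, hle, hC⟩
  subst hτ0
  simp only [add_zero, sub_zero] at hle
  linarith

theorem stmt_6_general (d : ℝ) (hd : 0 < d) (f : ℝ → ℝ)
    (hf_mono : StrictMonoOn f (Set.Ici 0)) (hf_conv : ConvexOn ℝ (Set.Ici 0) f)
    (hf_top : Filter.Tendsto f Filter.atTop Filter.atTop)
    (t : ℝ → ℝ)
    (ht : ∀ m : ℝ, 0 < m →
      {ℓ : ℝ | ℓ ∈ Set.Icc 0 (2 * m) ∧ f ℓ + f (2 * m - ℓ) ≤ 2 * (f m + d)} =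
        Set.Icc (m - t m) (m + t m)) :
    ∀ C : ℝ, ∃ᶠ m in Filter.atTop, C < f (m + t m) - f (m - t m) := by
  intro C
  by_contra hbounded
  simp only [not_frequently, not_lt] at hbounded
  have hcont : ContinuousOn f (Ioi 0) := by
    simpa only [interior_Ici] using hf_conv.continuousOn_interior
  have hf_two_mul : ∀ᶠ m in atTop, C < f (2 * m) - f 0 :=
    (hf_top.comp (tendsto_id.const_mul_atTop two_pos)).eventually_gt_atTop (C + f 0) |>.mono
      fun m hm => by simp only [Function.comp_apply, id] at hm; linarith
  obtain ⟨M, hM⟩ :=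
    (hbounded.and (hf_two_mul.and (eventually_gt_atTop 0))).exists_forall_of_atTop
  refine not_forall_isTightWindow (M := M) (C := C) (t := t) hf_conv hf_mono.monotoneOn hd ?_
  intro m hm
  obtain ⟨hCm, hCf, hm⟩ := hM m hm
  exact isTightWindow_of_eq_Icc hcont hd hm.le (ht m hm) hCm hCf

/-- Let `d > 0` and `f : [0,∞) → [0,∞)` be increasing, convex, with
`f 0 = 0` and `f(x) → ∞`.  If `[m - t m, m + t m]` is the set
`L^f_{m,d} = {ℓ ∈ [0,2m] : f(ℓ)+f(2m-ℓ) ≤ 2(f(m)+d)}`, then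
`limsup_{m→∞} (f(m + t m) - f(m - t m)) = ∞`. -/
theorem stmt_6 (d : ℝ) (hd : 0 < d) (f : ℝ → ℝ)
    (hf_mono : StrictMonoOn f (Set.Ici 0)) (hf_conv : ConvexOn ℝ (Set.Ici 0) f)
    (hf_nonneg : ∀ x ∈ Set.Ici (0:ℝ), 0 ≤ f x) (hf0 : f 0 = 0)
    (hf_top : Filter.Tendsto f Filter.atTop Filter.atTop)
    (t : ℝ → ℝ)
    (ht : ∀ m : ℝ, 0 < m →
      {ℓ : ℝ | ℓ ∈ Set.Icc 0 (2 * m) ∧ f ℓ + f (2 * m - ℓ) ≤ 2 * (f m + d)} =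
        Set.Icc (m - t m) (m + t m)) :
    ∀ C : ℝ, ∃ᶠ m in Filter.atTop, C < f (m + t m) - f (m - t m) :=
  stmt_6_general d hd f hf_mono hf_conv hf_top t ht
end

section
/- Let g : [0,∞) → [0,∞) be nondecreasing with g(0)=0 and g(x)→∞, and let h be its convex minorant. If g(x) - h(x) → ∞ as x → ∞, then limsup_{m→∞} (2g(m) - g(2m)) = ∞. -/
/-!
Suppose `2 g(m) - g(2m) ≤ C` for all large `m`; iterating gives `g(t) ≤ g(2^i t) / 2^i + C`.
Fix `x₀` beyond which `g - h ≥ 1` and let `σ` be the largest slope of a line through `(x₀, 0)`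
lying below `h` beyond `x₀`. By maximality of `h`, the steeper line of slope `σ + 1/X` is not a
minorant of `g`, so it passes above `g` at some `Y`, and `g - h ≥ 1` forces `Y ≥ X`. Halving `Y`
down into `[X, 2X)` gives a point `t ≥ X` where `g(t) - h(t) ≤ σ x₀ + C + 2`, a bound independent
of `X`; this contradicts `g - h → ∞`.
-/

open Filter Set

theorem exists_max_slope_of_nonneg {h : ℝ → ℝ} {x₀ : ℝ} (hh : ∀ y, x₀ < y → 0 ≤ h y) :
    ∃ σ, 0 ≤ σ ∧ (∀ y, x₀ < y → σ * (y - x₀) ≤ h y) ∧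
      ∀ s, σ < s → ∃ y, x₀ < y ∧ h y < s * (y - x₀) := by
  set S := (fun y => h y / (y - x₀)) '' Ioi x₀
  have hS : S.Nonempty := (nonempty_Ioi (a := x₀)).image _
  have hS0 : ∀ r ∈ S, 0 ≤ r := by
    rintro _ ⟨y, hy, rfl⟩
    exact div_nonneg (hh y hy) (sub_nonneg.2 hy.le)
  refine ⟨sInf S, le_csInf hS hS0, fun y hy => ?_, fun s hs => ?_⟩
  · rw [← le_div_iff₀ (sub_pos.2 hy)]
    exact csInf_le ⟨0, hS0⟩ ⟨y, hy, rfl⟩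
  · obtain ⟨_, ⟨y, hy, rfl⟩, hlt⟩ := exists_lt_of_csInf_lt hS hs
    exact ⟨y, hy, (div_lt_iff₀ (sub_pos.2 hy)).1 hlt⟩

theorem le_div_two_pow_add_of_two_mul_sub_le {g : ℝ → ℝ} {C M : ℝ} (hC : 0 ≤ C) (hM : 0 ≤ M)
    (hdouble : ∀ m, M ≤ m → 2 * g m - g (2 * m) ≤ C) (i : ℕ) {m : ℝ} (hm : M ≤ m) :
    g m ≤ g (2 ^ i * m) / 2 ^ i + C := by
  induction i generalizing m with
  | zero => simp [hC]
  | succ i ih =>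
    rw [show (2:ℝ) ^ (i + 1) * m = 2 ^ i * (2 * m) by ring, pow_succ, ← div_div]
    linarith [ih (m := 2 * m) (by linarith), hdouble m hm]

theorem exists_eq_two_pow_mul {X Y : ℝ} (hX : 0 < X) (hXY : X ≤ Y) :
    ∃ i : ℕ, ∃ t, X ≤ t ∧ t < 2 * X ∧ Y = 2 ^ i * t := by
  obtain ⟨i, hle, hlt⟩ := exists_nat_pow_near ((one_le_div hX).2 hXY) one_lt_two
  have hpos : (0:ℝ) < 2 ^ i := by positivity
  refine ⟨i, Y / 2 ^ i, ?_, ?_, by field_simp⟩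
  · rwa [le_div_iff₀ hpos, mul_comm, ← le_div_iff₀ hX]
  · rwa [div_lt_iff₀ hpos, mul_comm, ← mul_assoc, ← pow_succ, ← div_lt_iff₀ hX]

def DominatesMonotoneConvexMinorants (g h : ℝ → ℝ) : Prop :=
  ∀ h' : ℝ → ℝ, ConvexOn ℝ (Ici 0) h' → MonotoneOn h' (Ici 0) →
    (∀ x ∈ Ici (0:ℝ), h' x ≤ g x) → ∀ x ∈ Ici (0:ℝ), h' x ≤ h x

namespace DominatesMonotoneConvexMinorants

variable {g h : ℝ → ℝ}

theorem nonneg (hmax : DominatesMonotoneConvexMinorants g h) (hg : ∀ x ∈ Ici (0:ℝ), 0 ≤ g x) :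
    ∀ x ∈ Ici (0:ℝ), 0 ≤ h x :=
  hmax (fun _ => 0) (convexOn_const 0 (convex_Ici 0)) monotoneOn_const hg

theorem exists_lt_line (hmax : DominatesMonotoneConvexMinorants g h) {s x₀ y : ℝ} (hs : 0 ≤ s)
    (hy : 0 ≤ y) (hlt : h y < s * (y - x₀)) : ∃ Y, 0 ≤ Y ∧ g Y < s * (Y - x₀) := by
  by_contra! hle
  have hconv : ConvexOn ℝ (Ici 0) fun y => s * (y - x₀) :=
    ((convexOn_id (convex_Ici 0)).add_const (-x₀)).smul hs
  have hmono : MonotoneOn (fun y => s * (y - x₀)) (Ici 0) := fun a _ b _ hab =>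
    mul_le_mul_of_nonneg_left (by linarith) hs
  exact hlt.not_ge (hmax _ hconv hmono hle y hy)

theorem frequently_sub_lt_of_two_mul_sub_le (hmax : DominatesMonotoneConvexMinorants g h)
    (hg : ∀ x ∈ Ici (0:ℝ), 0 ≤ g x) {C M x₀ : ℝ} (hC : 0 ≤ C) (hM : 0 ≤ M)
    (hdouble : ∀ m, M ≤ m → 2 * g m - g (2 * m) ≤ C) (hx₀ : 0 ≤ x₀)
    (hgap : ∀ y, x₀ ≤ y → 1 ≤ g y - h y) :
    ∃ K, ∃ᶠ t in atTop, g t - h t < K := by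
  obtain ⟨σ, hσ, hσh, hσlt⟩ :=
    exists_max_slope_of_nonneg fun y hy => hmax.nonneg hg y (hx₀.trans hy.le)
  refine ⟨σ * x₀ + C + 2, frequently_atTop.2 fun X₀ => ?_⟩
  set X := max (max X₀ M) (x₀ + 1)
  have hX₀X : X₀ ≤ X := (le_max_left _ _).trans (le_max_left _ _)
  have hMX : M ≤ X := (le_max_right _ _).trans (le_max_left _ _)
  have hx₀X : x₀ + 1 ≤ X := le_max_right _ _
  have hX : 0 < X := by linarith
  set s := σ + 1 / X
  have hs : 0 ≤ s := by positivity
  obtain ⟨Y, hY, hYg⟩ : ∃ Y, 0 ≤ Y ∧ g Y < s * (Y - x₀) := by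
    obtain ⟨y, hy, hys⟩ := hσlt s (by simp only [s]; linarith [one_div_pos.2 hX])
    exact hmax.exists_lt_line hs (hx₀.trans hy.le) hys
  have hXY : X ≤ Y := by
    by_contra! hYX
    rcases le_or_gt Y x₀ with hYx₀ | hx₀Y
    · nlinarith [hg Y hY]
    · have hfrac : (Y - x₀) / X ≤ 1 := (div_le_one hX).2 (by linarith)
      have hsplit : s * (Y - x₀) = σ * (Y - x₀) + (Y - x₀) / X := by simp only [s]; ring
      linarith [hσh Y hx₀Y, hgap Y hx₀Y.le]
  obtain ⟨i, t, hXt, ht2X, rfl⟩ := exists_eq_two_pow_mul hX hXY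
  refine ⟨t, hX₀X.trans hXt, ?_⟩
  have hpow : (0:ℝ) < 2 ^ i := by positivity
  have hYt : g (2 ^ i * t) / 2 ^ i < s * t := by
    rw [div_lt_iff₀ hpow]
    calc g (2 ^ i * t) < s * (2 ^ i * t - x₀) := hYg
      _ ≤ s * t * 2 ^ i := by nlinarith
  have hst : s * t < σ * t + 2 := by
    have : t / X < 2 := (div_lt_iff₀ hX).2 (by linarith)
    have hsplit : s * t = σ * t + t / X := by simp only [s]; ring
    linarith
  linarith [le_div_two_pow_add_of_two_mul_sub_le hC hM hdouble i (hMX.trans hXt),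
    hσh t (by linarith)]

end DominatesMonotoneConvexMinorants

theorem stmt_8_general (g h : ℝ → ℝ)
    (hg_nonneg : ∀ x ∈ Set.Ici (0:ℝ), 0 ≤ g x)
    (hh_max : ∀ h' : ℝ → ℝ, ConvexOn ℝ (Set.Ici 0) h' → MonotoneOn h' (Set.Ici 0) →
      (∀ x ∈ Set.Ici (0:ℝ), h' x ≤ g x) → ∀ x ∈ Set.Ici (0:ℝ), h' x ≤ h x)
    (hgap : Filter.Tendsto (fun x => g x - h x) Filter.atTop Filter.atTop) :
    ∀ C : ℝ, ∃ᶠ m in Filter.atTop, C < 2 * g m - g (2 * m) := by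
  intro C
  by_contra hC
  obtain ⟨M, hM⟩ := eventually_atTop.1 (not_frequently.1 hC)
  obtain ⟨x₀, hx₀⟩ := eventually_atTop.1 (hgap.eventually_ge_atTop 1)
  obtain ⟨K, hK⟩ := DominatesMonotoneConvexMinorants.frequently_sub_lt_of_two_mul_sub_le hh_max
    hg_nonneg (le_max_right C 0) (le_max_right M 0)
    (fun m hm => (not_lt.1 (hM m ((le_max_left _ _).trans hm))).trans (le_max_left _ _))
    (le_max_right x₀ 0) fun y hy => hx₀ y ((le_max_left _ _).trans hy)
  obtain ⟨t, htK, hKt⟩ := (hK.and_eventually (hgap.eventually_ge_atTop K)).exists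
  exact htK.not_ge hKt

/-- Let `g : [0,∞) → [0,∞)` be nondecreasing with `g 0 = 0` and `g(x) → ∞`,
and let `h` be its convex minorant.  If `g(x) - h(x) → ∞`, then
`limsup_{m→∞} (2 g(m) - g(2m)) = ∞`. -/
theorem stmt_8 (g h : ℝ → ℝ)
    (hg_mono : MonotoneOn g (Set.Ici 0)) (hg_nonneg : ∀ x ∈ Set.Ici (0:ℝ), 0 ≤ g x)
    (hg0 : g 0 = 0) (hg_top : Filter.Tendsto g Filter.atTop Filter.atTop)
    (hh_conv : ConvexOn ℝ (Set.Ici 0) h) (hh_mono : MonotoneOn h (Set.Ici 0))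
    (hh_le : ∀ x ∈ Set.Ici (0:ℝ), h x ≤ g x)
    (hh_max : ∀ h' : ℝ → ℝ, ConvexOn ℝ (Set.Ici 0) h' → MonotoneOn h' (Set.Ici 0) →
      (∀ x ∈ Set.Ici (0:ℝ), h' x ≤ g x) → ∀ x ∈ Set.Ici (0:ℝ), h' x ≤ h x)
    (hgap : Filter.Tendsto (fun x => g x - h x) Filter.atTop Filter.atTop) :
    ∀ C : ℝ, ∃ᶠ m in Filter.atTop, C < 2 * g m - g (2 * m) :=
  stmt_8_general g h hg_nonneg hh_max hgap
end

section
/- Let X, Y be i.i.d. nonnegative random variables with unbounded support, g(x) = -log P(X > x), and let h be the convex minorant of g. If g - h tends to infinity, then limsup_{m→∞} P(X+Y > 2m)/(P(X>m)²) = ∞. -/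
/-!
If the limsup were finite, then `P(X + Y > 2m) ≤ B P(X > m)²` for large `m`. As
`{X > a} ∩ {Y > b} ⊆ {X + Y > a + b}`, independence gives `P(X > a) P(X > b) ≤ B P(X > (a+b)/2)²`,
i.e. `g` is midpoint convex up to the additive error `(log B)/2` on some `[M, ∞)`. Since `g` is
nondecreasing, dyadic approximation upgrades this to convexity up to `log B`, so at each `x ≥ M`
some line of nonnegative slope lies below `g` on `[0, ∞)` and within a fixed distance of `g x`.
Such a line is a convex nondecreasing minorant of `g`, hence lies below `h`: `g - h` stays bounded
on `[M, ∞)`, contradicting `g - h → ∞`.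
-/

open MeasureTheory ProbabilityTheory Filter Set

def ConvexIneqUpTo (s : Set ℝ) (f : ℝ → ℝ) (t δ : ℝ) : Prop :=
  ∀ ⦃a⦄, a ∈ s → ∀ ⦃b⦄, b ∈ s → f (t * a + (1 - t) * b) ≤ t * f a + (1 - t) * f b + δ

theorem Convex.mul_add_one_sub_mul_mem {s : Set ℝ} (hs : Convex ℝ s) {a b t : ℝ} (ha : a ∈ s)
    (hb : b ∈ s) (ht0 : 0 ≤ t) (ht1 : t ≤ 1) : t * a + (1 - t) * b ∈ s := by
  simpa only [smul_eq_mul] using hs ha hb ht0 (sub_nonneg.2 ht1) (add_sub_cancel t 1)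

namespace ConvexIneqUpTo

variable {s : Set ℝ} {f : ℝ → ℝ} {ε : ℝ}

theorem zero : ConvexIneqUpTo s f 0 0 := fun _ _ _ _ => by simp

theorem one : ConvexIneqUpTo s f 1 0 := fun _ _ _ _ => by simp

theorem error_nonneg {t δ a : ℝ} (h : ConvexIneqUpTo s f t δ) (ha : a ∈ s) : 0 ≤ δ := by
  have := h ha ha
  ring_nf at this
  linarith

theorem midpoint_weight (hs : Convex ℝ s) (hmid : ConvexIneqUpTo s f (1 / 2) ε) {q r δ δ' : ℝ}
    (hq0 : 0 ≤ q) (hq1 : q ≤ 1) (hr0 : 0 ≤ r) (hr1 : r ≤ 1)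
    (hq : ConvexIneqUpTo s f q δ) (hr : ConvexIneqUpTo s f r δ') :
    ConvexIneqUpTo s f ((q + r) / 2) ((δ + δ') / 2 + ε) := by
  intro a ha b hb
  have hmid' := hmid (hs.mul_add_one_sub_mul_mem ha hb hq0 hq1)
    (hs.mul_add_one_sub_mul_mem ha hb hr0 hr1)
  have hpt : (q + r) / 2 * a + (1 - (q + r) / 2) * b
      = 1 / 2 * (q * a + (1 - q) * b) + (1 - 1 / 2) * (r * a + (1 - r) * b) := by ring
  rw [hpt]
  linarith [hq ha hb, hr ha hb]

theorem dyadic (hs : Convex ℝ s) (hmid : ConvexIneqUpTo s f (1 / 2) ε) :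
    ∀ n k : ℕ, k ≤ 2 ^ n → ConvexIneqUpTo s f (k / 2 ^ n) (2 * ε) := by
  intro n
  induction n with
  | zero =>
    intro k hk a ha b hb
    have hε := hmid.error_nonneg ha
    interval_cases k
    all_goals simp; linarith
  | succ n ih =>
    intro k hk
    have h2n : (0 : ℝ) < 2 ^ n := by positivity
    rcases le_or_gt k (2 ^ n) with hk' | hk'
    · have hq1 : (k : ℝ) / 2 ^ n ≤ 1 := by
        rw [div_le_one h2n]; exact_mod_cast hk'
      convert midpoint_weight hs hmid (by positivity) hq1 le_rfl zero_le_one (ih k hk') zero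
        using 1 <;> [(rw [pow_succ]; ring); ring]
    · obtain ⟨j, rfl⟩ : ∃ j, k = j + 2 ^ n := ⟨k - 2 ^ n, by omega⟩
      have hj : j ≤ 2 ^ n := by rw [pow_succ] at hk; omega
      have hq1 : (j : ℝ) / 2 ^ n ≤ 1 := by
        rw [div_le_one h2n]; exact_mod_cast hj
      convert midpoint_weight hs hmid (by positivity) hq1 zero_le_one le_rfl (ih j hj) one
        using 1 <;> [(push_cast; rw [pow_succ]; field_simp); ring]

theorem of_dyadic (hs : Convex ℝ s) (hf : MonotoneOn f s) {δ : ℝ}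
    (hdy : ∀ n k : ℕ, k ≤ 2 ^ n → ConvexIneqUpTo s f (k / 2 ^ n) δ) {t : ℝ} (ht0 : 0 ≤ t)
    (ht1 : t ≤ 1) : ConvexIneqUpTo s f t δ := by
  intro a ha b hb
  wlog hab : a ≤ b generalizing a b t
  · convert this (sub_nonneg.2 ht1) (sub_le_self 1 ht0) hb ha (le_of_not_ge hab) using 1 <;> ring_nf
  -- Round `t` down to a dyadic `q`: since `a ≤ b`, this moves the point towards `b`.
  refine le_of_forall_pos_le_add fun η hη => ?_
  obtain ⟨n, hn⟩ := pow_unbounded_of_one_lt ((f b - f a) / η) one_lt_two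
  have h2n : (0 : ℝ) < 2 ^ n := by positivity
  set k := ⌊t * 2 ^ n⌋₊
  have hk : k ≤ 2 ^ n := Nat.floor_le_of_le (by push_cast; nlinarith)
  have hkt : (k : ℝ) ≤ t * 2 ^ n := Nat.floor_le (by positivity)
  have htk : t * 2 ^ n < k + 1 := Nat.lt_floor_add_one _
  set q : ℝ := k / 2 ^ n
  have hqt : q ≤ t := (div_le_iff₀ h2n).2 hkt
  have hq1 : q ≤ 1 := hqt.trans ht1
  have hfab : f a ≤ f b := hf ha hb hab
  have herr : (t - q) * (f b - f a) ≤ η := by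
    have : (t - q) * 2 ^ n ≤ 1 := by
      rw [sub_mul, div_mul_cancel₀ _ h2n.ne']; linarith
    rw [div_lt_iff₀ hη] at hn
    nlinarith
  calc f (t * a + (1 - t) * b)
      ≤ f (q * a + (1 - q) * b) :=
        hf (hs.mul_add_one_sub_mul_mem ha hb ht0 ht1)
          (hs.mul_add_one_sub_mul_mem ha hb (by positivity) hq1) (by nlinarith)
    _ ≤ q * f a + (1 - q) * f b + δ := hdy n k hk ha hb
    _ = t * f a + (1 - t) * f b + δ + (t - q) * (f b - f a) := by ring
    _ ≤ t * f a + (1 - t) * f b + δ + η := by linarith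

end ConvexIneqUpTo

theorem exists_slope_of_convexIneqUpTo {f : ℝ → ℝ} {M δ x : ℝ} (hf : MonotoneOn f (Ici M))
    (hconv : ∀ t, 0 ≤ t → t ≤ 1 → ConvexIneqUpTo (Ici M) f t δ) (hx : M ≤ x) :
    ∃ c, 0 ≤ c ∧ ∀ w, M ≤ w → f x - δ + c * (w - x) ≤ f w := by
  have hδ : 0 ≤ δ := (hconv 1 zero_le_one le_rfl).error_nonneg (mem_Ici.2 hx)
  have hthree : ∀ w z, M ≤ w → w < x → x < z →
      (z - w) * f x ≤ (z - x) * f w + (x - w) * f z + δ * (z - w) := by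
    intro w z hw hwx hxz
    have hzw : 0 < z - w := by linarith
    have key := hconv ((z - x) / (z - w)) (by bound) ((div_le_one hzw).2 (by linarith))
      (mem_Ici.2 hw) (mem_Ici.2 (hx.trans hxz.le))
    have hpt : (z - x) / (z - w) * w + (1 - (z - x) / (z - w)) * z = x := by
      field_simp; ring
    rw [hpt] at key
    have := mul_le_mul_of_nonneg_left key hzw.le
    field_simp at this
    linarith
  -- `c` is the infimum of the right slopes raised by `δ`; `hthree` puts every left slope
  -- lowered by `δ` below all of them.
  set R := (fun z => (f z - f x + δ) / (z - x)) '' Ioi x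
  have hR : ∀ r ∈ R, 0 ≤ r := by
    rintro _ ⟨z, hxz, rfl⟩
    have hxz : x < z := hxz
    exact div_nonneg (by linarith [hf (mem_Ici.2 hx) (mem_Ici.2 (hx.trans hxz.le)) hxz.le])
      (by linarith)
  have hRne : R.Nonempty := nonempty_Ioi.image _
  refine ⟨sInf R, le_csInf hRne hR, fun w hw => ?_⟩
  rcases lt_trichotomy w x with hwx | rfl | hxw
  · have hleft : (f x - δ - f w) / (x - w) ≤ sInf R := by
      refine le_csInf hRne ?_
      rintro _ ⟨z, hxz, rfl⟩
      have hxz : x < z := hxz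
      rw [div_le_div_iff₀ (by linarith) (by linarith)]
      nlinarith [hthree w z hw hwx hxz]
    rw [div_le_iff₀ (by linarith)] at hleft
    nlinarith
  · simpa using hδ
  · have hright := csInf_le ⟨0, hR⟩ ⟨w, hxw, rfl⟩
    rw [le_div_iff₀ (by linarith)] at hright
    linarith

theorem exists_affine_le_of_convexIneqUpTo {f : ℝ → ℝ} {M δ x : ℝ} (hM : 0 ≤ M)
    (hf : MonotoneOn f (Ici 0)) (hconv : ∀ t, 0 ≤ t → t ≤ 1 → ConvexIneqUpTo (Ici M) f t δ)
    (hx : M ≤ x) :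
    ∃ c b, 0 ≤ c ∧ f x - δ - (f M - f 0) ≤ c * x + b ∧ ∀ w ∈ Ici (0 : ℝ), c * w + b ≤ f w := by
  obtain ⟨c, hc, hline⟩ :=
    exists_slope_of_convexIneqUpTo (hf.mono (Ici_subset_Ici.2 hM)) hconv hx
  have hf0M : f 0 ≤ f M := hf self_mem_Ici hM hM
  refine ⟨c, f x - δ - (f M - f 0) - c * x, hc, by linarith, fun w hw => ?_⟩
  rcases le_total M w with hMw | hwM
  · linarith [hline w hMw, mul_sub c w x]
  · have hf0w : f 0 ≤ f w := hf self_mem_Ici hw hw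
    nlinarith [hline M le_rfl]

theorem measure_gt_mul_measure_gt_le_measure_add_gt {Ω : Type*} [MeasurableSpace Ω]
    {P : Measure Ω} {X Y : Ω → ℝ} (hXY : IndepFun X Y P) (hid : IdentDistrib X Y P P) (a b : ℝ) :
    P {ω | X ω > a} * P {ω | X ω > b} ≤ P {ω | X ω + Y ω > a + b} := by
  have hident : P {ω | X ω > b} = P {ω | Y ω > b} := hid.measure_mem_eq measurableSet_Ioi
  calc P {ω | X ω > a} * P {ω | X ω > b}
      = P ({ω | X ω > a} ∩ {ω | Y ω > b}) := by
        rw [hident]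
        exact (hXY.measure_inter_preimage_eq_mul _ _ measurableSet_Ioi measurableSet_Ioi).symm
    _ ≤ P {ω | X ω + Y ω > a + b} :=
        measure_mono fun ω ⟨hXa, hYb⟩ => show a + b < X ω + Y ω from add_lt_add hXa hYb

theorem exists_eventually_le_mul_of_limsup_div_ne_top {α : Type*} {l : Filter α}
    {u v : α → ENNReal} (h : limsup (fun x => u x / v x) l ≠ ⊤) :
    ∃ B : NNReal, 0 < B ∧ ∀ᶠ x in l, u x ≤ B * v x := by
  refine ⟨(limsup (fun x => u x / v x) l).toNNReal + 1, by positivity, ?_⟩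
  have hlt : limsup (fun x => u x / v x) l
      < ((limsup (fun x => u x / v x) l).toNNReal + 1 : NNReal) := by
    rw [ENNReal.coe_add, ENNReal.coe_toNNReal h]
    exact ENNReal.lt_add_right h one_ne_zero
  filter_upwards [eventually_lt_of_limsup_lt hlt] with x hx
  exact (ENNReal.div_le_iff_le_mul (Or.inr ENNReal.coe_ne_top) (Or.inr (by positivity))).1 hx.le

section Tail

variable {Ω : Type*} [MeasurableSpace Ω] {P : Measure Ω} {X Y : Ω → ℝ}

theorem monotone_neg_log_measure_gt [IsFiniteMeasure P] (hXu : ∀ m : ℝ, 0 < P {ω | X ω > m}) :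
    Monotone fun x => -Real.log (P {ω | X ω > x}).toReal := fun _ t hst =>
  neg_le_neg <| Real.log_le_log (ENNReal.toReal_pos (hXu t).ne' (measure_ne_top _ _)) <|
    ENNReal.toReal_mono (measure_ne_top _ _) <| measure_mono fun _ hω => lt_of_le_of_lt hst hω

theorem convexIneqUpTo_half_neg_log_measure_gt [IsFiniteMeasure P] (hXY : IndepFun X Y P)
    (hid : IdentDistrib X Y P P) (hXu : ∀ m : ℝ, 0 < P {ω | X ω > m}) {B : NNReal} (hB : 0 < B)
    {M : ℝ} (hbound : ∀ m, M ≤ m → P {ω | X ω + Y ω > 2 * m} ≤ B * P {ω | X ω > m} ^ 2) :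
    ConvexIneqUpTo (Ici M) (fun x => -Real.log (P {ω | X ω > x}).toReal) (1 / 2)
      (Real.log B / 2) := by
  intro a ha b hb
  have hp : ∀ x : ℝ, 0 < (P {ω | X ω > x}).toReal :=
    fun x => ENNReal.toReal_pos (hXu x).ne' (measure_ne_top _ _)
  have hab : a + b = 2 * (1 / 2 * a + (1 - 1 / 2) * b) := by ring
  have hprod := (measure_gt_mul_measure_gt_le_measure_add_gt hXY hid a b).trans
    (hab ▸ hbound _ (by simp only [mem_Ici] at ha hb; linarith))
  have hreal := ENNReal.toReal_mono (by finiteness) hprod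
  simp only [ENNReal.toReal_mul, ENNReal.toReal_pow, ENNReal.coe_toReal] at hreal
  have hlog := Real.log_le_log (mul_pos (hp a) (hp b)) hreal
  rw [Real.log_mul (hp a).ne' (hp b).ne',
    Real.log_mul (NNReal.coe_pos.2 hB).ne' (pow_pos (hp _) 2).ne', Real.log_pow] at hlog
  push_cast at hlog
  linarith

end Tail

theorem stmt_10_general {Ω : Type*} [MeasurableSpace Ω] (P : Measure Ω) [IsProbabilityMeasure P]
    (X Y : Ω → ℝ)
    (hXY : IndepFun X Y P) (hid : IdentDistrib X Y P P)
    (hXu : ∀ m : ℝ, 0 < P {ω | X ω > m})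
    (g h : ℝ → ℝ)
    (hg : ∀ x : ℝ, g x = -Real.log (P {ω | X ω > x}).toReal)
    (hh_max : ∀ h' : ℝ → ℝ, ConvexOn ℝ (Set.Ici 0) h' → MonotoneOn h' (Set.Ici 0) →
      (∀ x ∈ Set.Ici (0:ℝ), h' x ≤ g x) → ∀ x ∈ Set.Ici (0:ℝ), h' x ≤ h x)
    (hgap : Filter.Tendsto (fun x => g x - h x) Filter.atTop Filter.atTop) :
    Filter.limsup
      (fun m : ℝ => P {ω | X ω + Y ω > 2 * m} / (P {ω | X ω > m}) ^ 2)
      Filter.atTop = ⊤ := by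
  have hg' : g = fun x => -Real.log (P {ω | X ω > x}).toReal := funext hg
  by_contra hL
  obtain ⟨B, hB, hbound⟩ := exists_eventually_le_mul_of_limsup_div_ne_top hL
  obtain ⟨M₀, hM₀⟩ := eventually_atTop.1 hbound
  set M := max M₀ 0
  have hmono : Monotone g := hg' ▸ monotone_neg_log_measure_gt hXu
  have hmid : ConvexIneqUpTo (Ici M) g (1 / 2) (Real.log B / 2) := hg' ▸
    convexIneqUpTo_half_neg_log_measure_gt hXY hid hXu hB fun m hm => hM₀ m (le_of_max_le_left hm)
  have hconv t (ht0 : 0 ≤ t) (ht1 : t ≤ 1) : ConvexIneqUpTo (Ici M) g t (2 * (Real.log B / 2)) :=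
    .of_dyadic (convex_Ici M) (hmono.monotoneOn _) (.dyadic (convex_Ici M) hmid) ht0 ht1
  have hgap_le : ∀ x, M ≤ x → g x - h x ≤ Real.log B + (g M - g 0) := by
    intro x hx
    obtain ⟨c, b, hc, hxb, hle⟩ :=
      exists_affine_le_of_convexIneqUpTo (le_max_right _ _) (hmono.monotoneOn _) hconv hx
    have hline := hh_max (fun w => c * w + b)
      (((LinearMap.mul ℝ ℝ c).convexOn (convex_Ici 0)).add_const b)
      (((monotone_id.const_mul hc).add_const b).monotoneOn _) hle x ((le_max_right _ _).trans hx)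
    linarith
  obtain ⟨x, hx, hgx⟩ :=
    ((eventually_ge_atTop M).and (hgap.eventually_gt_atTop (Real.log B + (g M - g 0)))).exists
  linarith [hgap_le x hx]

/-- Let `X, Y` be i.i.d. nonnegative random variables with unbounded
support, `g(x) = -log P(X > x)`, and `h` the convex minorant of `g`.  If `g - h → ∞` then
`limsup_{m→∞} P(X+Y > 2m)/P(X>m)² = ∞`. -/
theorem stmt_10 {Ω : Type*} [MeasurableSpace Ω] (P : Measure Ω) [IsProbabilityMeasure P]
    (X Y : Ω → ℝ) (hXm : Measurable X) (hYm : Measurable Y)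
    (hXY : IndepFun X Y P) (hid : IdentDistrib X Y P P)
    (hX0 : ∀ ω, 0 ≤ X ω) (hY0 : ∀ ω, 0 ≤ Y ω)
    (hXu : ∀ m : ℝ, 0 < P {ω | X ω > m})
    (g h : ℝ → ℝ)
    (hg : ∀ x : ℝ, g x = -Real.log (P {ω | X ω > x}).toReal)
    (hh_conv : ConvexOn ℝ (Set.Ici 0) h) (hh_mono : MonotoneOn h (Set.Ici 0))
    (hh_le : ∀ x ∈ Set.Ici (0:ℝ), h x ≤ g x)
    (hh_max : ∀ h' : ℝ → ℝ, ConvexOn ℝ (Set.Ici 0) h' → MonotoneOn h' (Set.Ici 0) →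
      (∀ x ∈ Set.Ici (0:ℝ), h' x ≤ g x) → ∀ x ∈ Set.Ici (0:ℝ), h' x ≤ h x)
    (hgap : Filter.Tendsto (fun x => g x - h x) Filter.atTop Filter.atTop) :
    Filter.limsup
      (fun m : ℝ => P {ω | X ω + Y ω > 2 * m} / (P {ω | X ω > m}) ^ 2)
      Filter.atTop = ⊤ :=
  stmt_10_general P X Y hXY hid hXu g h hg hh_max hgap
end

section
/- Let g : [0,∞) → [0,∞) be nondecreasing, right-continuous, with g(0)=0 and g(x)→∞, and let h be its convex minorant. Suppose liminf_{x→∞}(g(x)-h(x)) < ∞ and limsup_{x→∞}(g(x)-h(x)) = ∞. Then for every d > 0, limsup_{m→∞} |L^g_{m,d}|_g = ∞, where L^g_{m,d} = {ℓ ∈ [0,2m] : g(ℓ)+g(2m-ℓ) ≤ 2(g(m)+d)} and |·|_g is the g-Lebesgue–Stieltjes measure. -/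
open Filter Set

/-!
Suppose `|L^g_{m,d}|_g ≤ K` for all large `m`. If `m` almost maximises the height of `g` above
its chord over `[u, w]`, then the whole interval `[max u (2m - w), m]` lies in `L^g_{m,d}`, so `g`
rises by at most `K` on it; this caps the height of `g` above any chord far out by `K + 2d`.
Such a nearly convex nondecreasing function lies above a nondecreasing line passing `K + 2d` below
`g y`, for every large `y`. Lowered by `g M₀ ≥ 0`, that line is a convex nondecreasing minorant of
`g` on `[0, ∞)`, hence lies below `h`; so `g - h` is bounded far out, contradicting
`limsup (g - h) = ∞`.
-/

theorem StieltjesFunction.sub_le_of_Icc_subset (g : StieltjesFunction ℝ) {a b K : ℝ} {S : Set ℝ}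
    (hK : 0 ≤ K) (hab : Icc a b ⊆ S) (hS : g.measure S ≤ ENNReal.ofReal K) : g b - g a ≤ K := by
  have hIcc : ENNReal.ofReal (g b - Function.leftLim g a) ≤ ENNReal.ofReal K :=
    g.measure_Icc a b ▸ (MeasureTheory.measure_mono hab).trans hS
  linarith [(ENNReal.ofReal_le_ofReal_iff hK).1 hIcc, g.mono.leftLim_le (le_refl a)]

noncomputable def chordGap (g : ℝ → ℝ) (u w x : ℝ) : ℝ :=
  g x - g u - slope g u w * (x - u)

/-- What the argument uses of `|L^g_{m,d}|_g ≤ K` for `m ≥ M`: if `[a, m]` lies in `L^g_{m,d}`,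
then `g` increases by at most `K` over it. -/
def BalancedIncrementBound (g : ℝ → ℝ) (M K d : ℝ) : Prop :=
  ∀ a m, M ≤ a → a ≤ m → (∀ ℓ ∈ Icc a m, g ℓ + g (2 * m - ℓ) ≤ 2 * (g m + d)) → g m - g a ≤ K

section chordGap

variable {g : ℝ → ℝ} {M K d u w : ℝ}

theorem sub_mul_slope (g : ℝ → ℝ) (u w : ℝ) : (w - u) * slope g u w = g w - g u := by
  simpa using sub_smul_slope g u w

theorem chordGap_left : chordGap g u w u = 0 := by
  simp [chordGap]

theorem chordGap_right : chordGap g u w w = 0 := by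
  rw [chordGap, mul_comm, sub_mul_slope]; ring

theorem chordGap_add_reflect (m ℓ : ℝ) :
    chordGap g u w ℓ + chordGap g u w (2 * m - ℓ) =
      g ℓ + g (2 * m - ℓ) - 2 * (g m - chordGap g u w m) := by
  simp only [chordGap]; ring

theorem chordGap_sub (x x' : ℝ) :
    chordGap g u w x - chordGap g u w x' = g x - g x' - slope g u w * (x - x') := by
  simp only [chordGap]; ring

theorem chordGap_le_of_sub_lt_chordGap (hg : Monotone g) (hK : BalancedIncrementBound g M K d)
    (hd : 0 ≤ d) (hu : M ≤ u) {S m : ℝ} (hS : ∀ x ∈ Icc u w, chordGap g u w x ≤ S)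
    (hm : m ∈ Icc u w) (hSm : S - d < chordGap g u w m) : chordGap g u w m ≤ K + d := by
  have hσ : 0 ≤ slope g u w := (hg.monotoneOn univ).slope_nonneg trivial trivial
  obtain ⟨a, hua, hwa, ha⟩ : ∃ a, u ≤ a ∧ 2 * m - w ≤ a ∧ (a = u ∨ a = 2 * m - w) :=
    ⟨max u (2 * m - w), le_max_left _ _, le_max_right _ _, max_choice _ _⟩
  have ham : a ≤ m := by rcases ha with rfl | rfl <;> linarith [hm.1, hm.2]
  have hincr : g m - g a ≤ K := by
    refine hK a m (hu.trans hua) ham fun ℓ hℓ => ?_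
    have hreflect := chordGap_add_reflect (g := g) (u := u) (w := w) m ℓ
    linarith [hS ℓ ⟨hua.trans hℓ.1, hℓ.2.trans hm.2⟩,
      hS (2 * m - ℓ) ⟨by linarith [hℓ.2, hm.1], by linarith [hwa.trans hℓ.1]⟩]
  have hgap := chordGap_sub (g := g) (u := u) (w := w) m a
  rcases ha with rfl | rfl
  · rw [chordGap_left, sub_zero] at hgap
    nlinarith [mul_nonneg hσ (sub_nonneg.2 hm.1)]
  · have hright := chordGap_sub (g := g) (u := u) (w := w) w m
    rw [chordGap_right] at hright
    nlinarith [hg hm.2, hS _ ⟨hua, by linarith [hm.2]⟩]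

theorem chordGap_le (hg : Monotone g) (hK : BalancedIncrementBound g M K d) (hd : 0 < d)
    (hu : M ≤ u) (huw : u ≤ w) {y : ℝ} (hy : y ∈ Icc u w) : chordGap g u w y ≤ K + 2 * d := by
  have hσ : 0 ≤ slope g u w := (hg.monotoneOn univ).slope_nonneg trivial trivial
  have hbdd : BddAbove (chordGap g u w '' Icc u w) := by
    refine ⟨g w - g u, ?_⟩
    rintro _ ⟨x, hx, rfl⟩
    simp only [chordGap]
    nlinarith [hg hx.2, mul_nonneg hσ (sub_nonneg.2 hx.1)]
  have hS : ∀ x ∈ Icc u w, chordGap g u w x ≤ sSup (chordGap g u w '' Icc u w) :=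
    fun x hx => le_csSup hbdd (mem_image_of_mem _ hx)
  obtain ⟨-, ⟨m, hm, rfl⟩, hSm⟩ := exists_lt_of_lt_csSup
    ((nonempty_Icc.2 huw).image _) (sub_lt_self _ hd)
  linarith [hS y hy, chordGap_le_of_sub_lt_chordGap hg hK hd.le hu hS hm hSm]

end chordGap

/-- The slope is the infimum of the right difference quotients `(g w - (g y - β)) / (w - y)`:
the chord bound puts every left quotient `(g y - β - g u) / (y - u)` below the slope of the chord
over `[u, w]`, hence below each of them. -/
theorem exists_affine_minorant {g : ℝ → ℝ} {M β y : ℝ} (hg : Monotone g) (hβ : 0 ≤ β)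
    (hgap : ∀ u w, M ≤ u → u < y → y < w → chordGap g u w y ≤ β) :
    ∃ s, 0 ≤ s ∧ ∀ x, M ≤ x → g y - β + s * (x - y) ≤ g x := by
  set R : Set ℝ := (fun w => (g w - g y + β) / (w - y)) '' Ioi y
  have hR0 : ∀ r ∈ R, 0 ≤ r := by
    rintro _ ⟨w, hw, rfl⟩
    exact div_nonneg (by linarith [hg (le_of_lt hw)]) (sub_nonneg.2 (le_of_lt hw))
  have hRne : R.Nonempty := nonempty_Ioi.image _
  refine ⟨sInf R, le_csInf hRne hR0, fun x hx => ?_⟩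
  rcases lt_trichotomy x y with hxy | rfl | hxy
  · have hσ : (g y - β - g x) / (y - x) ≤ sInf R := by
      refine le_csInf hRne ?_
      rintro _ ⟨w, hw, rfl⟩
      have hyw : y < w := hw
      have hgap_xw := hgap x w hx hxy hyw
      have hslope := sub_mul_slope g x w
      rw [div_le_div_iff₀ (sub_pos.2 hxy) (sub_pos.2 hyw)]
      unfold chordGap at *
      nlinarith
    rw [div_le_iff₀ (sub_pos.2 hxy)] at hσ
    linarith
  · linarith
  · have hσ : sInf R ≤ (g x - g y + β) / (x - y) := csInf_le ⟨0, hR0⟩ (mem_image_of_mem _ hxy)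
    rw [le_div_iff₀ (sub_pos.2 hxy)] at hσ
    linarith

theorem convexOn_affine {S : Set ℝ} (hS : Convex ℝ S) (a s c : ℝ) :
    ConvexOn ℝ S fun x => a + s * (x - c) := by
  refine ⟨hS, fun x _ y _ p q _ _ hpq => le_of_eq ?_⟩
  simp only [smul_eq_mul]
  linear_combination (s * c - a) * hpq

theorem lowered_affine_le_on_Ici {g : ℝ → ℝ} (hg : ∀ x ∈ Ici (0 : ℝ), 0 ≤ g x) {M b s c : ℝ}
    (hM : 0 ≤ M) (hs : 0 ≤ s) (hA : ∀ x, M ≤ x → b + s * (x - c) ≤ g x) :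
    ∀ x ∈ Ici (0 : ℝ), b - g M + s * (x - c) ≤ g x := by
  intro x hx
  rcases le_total M x with hMx | hxM
  · linarith [hA x hMx, hg M hM]
  · nlinarith [hA M le_rfl, hg x hx]

theorem stmt_11_general (g : StieltjesFunction ℝ)
    (hg_nonneg : ∀ x ∈ Set.Ici (0:ℝ), 0 ≤ g x)
    (h : ℝ → ℝ)
    (hh_max : ∀ h' : ℝ → ℝ, ConvexOn ℝ (Set.Ici 0) h' → MonotoneOn h' (Set.Ici 0) →
      (∀ x ∈ Set.Ici (0:ℝ), h' x ≤ g x) → ∀ x ∈ Set.Ici (0:ℝ), h' x ≤ h x)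
    (hlimsup : ∀ C : ℝ, ∃ᶠ x in Filter.atTop, C < g x - h x) :
    ∀ d : ℝ, 0 < d →
      Filter.limsup
        (fun m : ℝ =>
          g.measure {ℓ : ℝ | ℓ ∈ Set.Icc 0 (2 * m) ∧ g ℓ + g (2 * m - ℓ) ≤ 2 * (g m + d)})
        Filter.atTop = ⊤ := by
  intro d hd
  by_contra hlim
  obtain ⟨K, hK, hlimK, -⟩ := ENNReal.lt_iff_exists_real_btwn.1 (lt_top_iff_ne_top.2 hlim)
  obtain ⟨M, hM⟩ := eventually_atTop.1 (eventually_lt_of_limsup_lt hlimK)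
  set M₀ := max M 0
  have hincr : BalancedIncrementBound g M₀ K d := by
    intro a m ha ham hL
    have hM₀ : 0 ≤ M₀ := le_max_right M 0
    refine g.sub_le_of_Icc_subset hK (fun ℓ hℓ => ?_)
      (hM m ((le_max_left M 0).trans (ha.trans ham))).le
    exact ⟨⟨hM₀.trans (ha.trans hℓ.1), by linarith [hℓ.1, hℓ.2]⟩, hL ℓ hℓ⟩
  obtain ⟨y, hy, hM₀y⟩ :=
    ((hlimsup (K + 2 * d + g M₀)).and_eventually (eventually_gt_atTop M₀)).exists
  obtain ⟨s, hs, hA⟩ := exists_affine_minorant g.mono (by positivity)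
    fun u w hu huy hyw => chordGap_le g.mono hincr hd hu (huy.trans hyw).le ⟨huy.le, hyw.le⟩
  have hmono : MonotoneOn (fun x => g y - (K + 2 * d) - g M₀ + s * (x - y)) (Ici 0) :=
    fun p _ q _ hpq => by dsimp only; gcongr
  have hline_le_h := hh_max _ (convexOn_affine (convex_Ici 0) _ s y) hmono
    (lowered_affine_le_on_Ici hg_nonneg (le_max_right M 0) hs hA) y
    ((le_max_right M 0).trans hM₀y.le)
  linarith

/-- **oscillating case.** Let `g` be a nondecreasing right-continuous
(Stieltjes) function, nonnegative on `[0,∞)` with `g 0 = 0` and `g(x) → ∞`, and let `h` be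
its convex minorant.  If `liminf_{x→∞}(g-h) < ∞` and `limsup_{x→∞}(g-h) = ∞`, then for every
`d > 0` we have `limsup_{m→∞} |L^g_{m,d}|_g = ∞`, where
`L^g_{m,d} = {ℓ ∈ [0,2m] : g(ℓ)+g(2m-ℓ) ≤ 2(g(m)+d)}` and `|·|_g` is the Lebesgue–Stieltjes
measure of `g`. -/
theorem stmt_11 (g : StieltjesFunction ℝ)
    (hg_nonneg : ∀ x ∈ Set.Ici (0:ℝ), 0 ≤ g x) (hg0 : g 0 = 0)
    (hg_top : Filter.Tendsto g Filter.atTop Filter.atTop)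
    (h : ℝ → ℝ)
    (hh_conv : ConvexOn ℝ (Set.Ici 0) h) (hh_mono : MonotoneOn h (Set.Ici 0))
    (hh_le : ∀ x ∈ Set.Ici (0:ℝ), h x ≤ g x)
    (hh_max : ∀ h' : ℝ → ℝ, ConvexOn ℝ (Set.Ici 0) h' → MonotoneOn h' (Set.Ici 0) →
      (∀ x ∈ Set.Ici (0:ℝ), h' x ≤ g x) → ∀ x ∈ Set.Ici (0:ℝ), h' x ≤ h x)
    (hliminf : ∃ C : ℝ, ∃ᶠ x in Filter.atTop, g x - h x < C)
    (hlimsup : ∀ C : ℝ, ∃ᶠ x in Filter.atTop, C < g x - h x) :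
    ∀ d : ℝ, 0 < d →
      Filter.limsup
        (fun m : ℝ =>
          g.measure {ℓ : ℝ | ℓ ∈ Set.Icc 0 (2 * m) ∧ g ℓ + g (2 * m - ℓ) ≤ 2 * (g m + d)})
        Filter.atTop = ⊤ :=
  stmt_11_general g hg_nonneg h hh_max hlimsup
end

section
/- Let h be affine on an interval I, let g : [0,∞) → [0,∞) be nondecreasing with g ≥ h on [0,∞), and let m ∈ I attain the maximum of g - h on I. If x₁,…,xₙ ∈ I satisfy Σⱼ λⱼxⱼ = m and (1/n)Σⱼ xⱼ ≤ m, then Σ_{j=1}^n g(xⱼ) ≤ n·g(m); i.e., (x₁,…,x_{n-1}) ∈ L^g_{m,0,λ̄}. -/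
/-!
On `I = [a, b]` we have `g x ≤ g m + (h x - h m)`, since `m` maximizes `g - h` there. Summing over
the `xⱼ` and using that `h` is affine, `Σⱼ h(xⱼ) = (n+1) h(x̄)` for the mean `x̄ ∈ I`; as `x̄ ≤ m` and
`h` is nondecreasing, the correction term `(n+1)(h x̄ - h m)` is nonpositive.
-/

open Finset Set

theorem Convex.sum_div_card_mem {ι : Type*} {s : Finset ι} (hs : s.Nonempty) {t : Set ℝ}
    (ht : Convex ℝ t) {x : ι → ℝ} (hx : ∀ i ∈ s, x i ∈ t) : (∑ i ∈ s, x i) / #s ∈ t := by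
  have hcard : (0 : ℝ) < #s := by exact_mod_cast hs.card_pos
  have hmem := ht.sum_mem (w := fun _ ↦ 1 / (#s : ℝ)) (fun _ _ ↦ by positivity)
    (by simp [hcard.ne']) hx
  simpa [div_eq_inv_mul, Finset.mul_sum] using hmem

theorem sum_apply_eq_card_mul_apply_average_of_affineOn {ι : Type*} {s : Finset ι}
    (hs : s.Nonempty) {t : Set ℝ} (ht : Convex ℝ t) {h : ℝ → ℝ} {α β : ℝ}
    (haff : ∀ y ∈ t, h y = α * y + β) {x : ι → ℝ} (hx : ∀ i ∈ s, x i ∈ t) :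
    ∑ i ∈ s, h (x i) = #s * h ((∑ i ∈ s, x i) / #s) := by
  have hcard : (#s : ℝ) ≠ 0 := by exact_mod_cast hs.card_pos.ne'
  rw [Finset.sum_congr rfl fun i hi ↦ haff (x i) (hx i hi), haff _ (ht.sum_div_card_mem hs hx),
    Finset.sum_add_distrib, ← Finset.mul_sum, Finset.sum_const, nsmul_eq_mul]
  field_simp

theorem stmt_16_general (n : ℕ) (g h : ℝ → ℝ)
    (hh_mono : MonotoneOn h (Set.Ici 0))
    (a b : ℝ) (ha : 0 ≤ a)
    (α β : ℝ) (haff : ∀ x ∈ Set.Icc a b, h x = α * x + β)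
    (m : ℝ) (hmI : m ∈ Set.Icc a b)
    (hmax : ∀ x ∈ Set.Icc a b, g x - h x ≤ g m - h m)
    (x : Fin (n + 1) → ℝ) (hx : ∀ j, x j ∈ Set.Icc a b)
    (havg : (∑ j, x j) / (n + 1) ≤ m) :
    ∑ j, g (x j) ≤ (n + 1) * g m := by
  have hcard : (#(univ : Finset (Fin (n + 1))) : ℝ) = n + 1 := by simp
  set xbar := (∑ j, x j) / (n + 1)
  have hxbar : xbar ∈ Icc a b := by
    simpa [hcard] using (convex_Icc a b).sum_div_card_mem univ_nonempty fun j _ ↦ hx j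
  have hsum_h : ∑ j, h (x j) = (n + 1) * h xbar := by
    simpa [hcard] using sum_apply_eq_card_mul_apply_average_of_affineOn univ_nonempty
      (convex_Icc a b) haff fun j _ ↦ hx j
  have hh_xbar : h xbar ≤ h m := hh_mono (ha.trans hxbar.1) (ha.trans hmI.1) havg
  calc ∑ j, g (x j) ≤ ∑ j, (g m + (h (x j) - h m)) :=
        sum_le_sum fun j _ ↦ by linarith [hmax (x j) (hx j)]
    _ = (n + 1) * g m + (n + 1) * (h xbar - h m) := by
        rw [sum_add_distrib, sum_sub_distrib, hsum_h]
        simp only [sum_const, card_univ, Fintype.card_fin, nsmul_eq_mul]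
        push_cast
        ring
    _ ≤ (n + 1) * g m := by
        have : (0 : ℝ) ≤ n + 1 := by positivity
        nlinarith

/-- **Observation: affine pieces.** Let `h` be a nondecreasing convex minorant
of `g` which is affine on the interval `I = [a,b] ⊆ [0,∞)`, let `g` be nondecreasing with
`h ≤ g`, and let `m ∈ I` attain the maximum of `g - h` on `I`.  If `x₀,…,xₙ ∈ I` satisfy
`Σⱼ λⱼ xⱼ = m` and `(1/(n+1)) Σⱼ xⱼ ≤ m`, then `Σⱼ g(xⱼ) ≤ (n+1) g(m)`
(i.e. `(x₀,…,x_{n-1}) ∈ L^g_{m,0,λ̄}`). -/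
theorem stmt_16 (n : ℕ) (g h : ℝ → ℝ)
    (hg_mono : MonotoneOn g (Set.Ici 0)) (hg_nonneg : ∀ x ∈ Set.Ici (0:ℝ), 0 ≤ g x)
    (hh_conv : ConvexOn ℝ (Set.Ici 0) h) (hh_mono : MonotoneOn h (Set.Ici 0))
    (hh_le : ∀ x ∈ Set.Ici (0:ℝ), h x ≤ g x)
    (a b : ℝ) (ha : 0 ≤ a) (hab : a ≤ b)
    (α β : ℝ) (haff : ∀ x ∈ Set.Icc a b, h x = α * x + β)
    (m : ℝ) (hmI : m ∈ Set.Icc a b)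
    (hmax : ∀ x ∈ Set.Icc a b, g x - h x ≤ g m - h m)
    (lam : Fin (n + 1) → ℝ) (hlam : ∀ j, lam j ∈ Set.Ioo (0:ℝ) 1) (hsum : ∑ j, lam j = 1)
    (x : Fin (n + 1) → ℝ) (hx : ∀ j, x j ∈ Set.Icc a b)
    (hwsum : ∑ j, lam j * x j = m)
    (havg : (∑ j, x j) / (n + 1) ≤ m) :
    ∑ j, g (x j) ≤ (n + 1) * g m :=
  stmt_16_general n g h hh_mono a b ha α β haff m hmI hmax x hx havg
end
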